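/- For any μ ∈ ℝ^m and any S ⊆ U, the quantity lb(μ, S) = min{ z^RLR(μ, S), ub(S) } is a valid lower bound on z^IP, and ub(S) is a valid upper bound on z^IP. -/

import Mathlib

/-!
Feasible points whose binary part lies in `S` cost at least `ub S`; every other feasible point
is feasible for the relaxation over `U \ S`, where the dualized term `μ ⬝ᵥ (b - A (u, y))`
vanishes, so it costs at least `zRLR S`. Conversely, `ub S` is an infimum over a subset of the
feasible points.
-/

open Matrix

lemma biInf_le_biInf_biInf_of_mk_mem {α β γ : Type*} [CompleteLattice γ] {F : Set (α × β)}
    {S : Set α} {G : α → Set β} (f : α × β → γ) (h : ∀ u ∈ S, ∀ y ∈ G u, (u, y) ∈ F) :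
    ⨅ p ∈ F, f p ≤ ⨅ u ∈ S, ⨅ y ∈ G u, f (u, y) :=
  le_iInf₂ fun u hu => le_iInf₂ fun y hy => iInf₂_le (u, y) (h u hu y hy)

lemma coe_add_biInf_sub_le_of_eq {ι : Type*} {s : Set ι} (a : ℝ) (f g : ι → ℝ) {i : ι}
    (hi : i ∈ s) (hg : g i = a) :
    (a : EReal) + ⨅ j ∈ s, ((f j - g j : ℝ) : EReal) ≤ f i :=
  calc (a : EReal) + ⨅ j ∈ s, ((f j - g j : ℝ) : EReal)
      ≤ (a : EReal) + ((f i - g i : ℝ) : EReal) := add_le_add_right (iInf₂_le i hi) _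
    _ = f i := by rw [hg, ← EReal.coe_add, add_sub_cancel]

theorem stmt_8_general {n1 n2 m : ℕ} (U : Set (Fin n1 → ℝ))
    (Y : (Fin n1 → ℝ) → Set (Fin n2 → ℝ))
    (c1 : Fin n1 → ℝ) (c2 : Fin n2 → ℝ)
    (A1 : Matrix (Fin m) (Fin n1) ℝ) (A2 : Matrix (Fin m) (Fin n2) ℝ) (b : Fin m → ℝ)
    (z : (Fin n1 → ℝ) → EReal)
    (hz : ∀ u, z u = ⨅ y ∈ {y : Fin n2 → ℝ | y ∈ Y u ∧ A1.mulVec u + A2.mulVec y = b},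
        ((c1 ⬝ᵥ u + c2 ⬝ᵥ y : ℝ) : EReal))
    (ub : Set (Fin n1 → ℝ) → EReal)
    (hub : ∀ S : Set (Fin n1 → ℝ), ub S = ⨅ u ∈ S, z u)
    (μ : Fin m → ℝ)
    (zRLR : Set (Fin n1 → ℝ) → EReal)
    (hzRLR : ∀ S : Set (Fin n1 → ℝ),
      zRLR S = ((μ ⬝ᵥ b : ℝ) : EReal) + ⨅ p ∈ {p : (Fin n1 → ℝ) × (Fin n2 → ℝ) |
        p.1 ∈ U \ S ∧ p.2 ∈ Y p.1},
        ((c1 ⬝ᵥ p.1 + c2 ⬝ᵥ p.2 - μ ⬝ᵥ (A1.mulVec p.1 + A2.mulVec p.2) : ℝ) : EReal))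
    (zIP : EReal)
    (hzIP : zIP = ⨅ p ∈ {p : (Fin n1 → ℝ) × (Fin n2 → ℝ) |
        p.1 ∈ U ∧ p.2 ∈ Y p.1 ∧ A1.mulVec p.1 + A2.mulVec p.2 = b},
        ((c1 ⬝ᵥ p.1 + c2 ⬝ᵥ p.2 : ℝ) : EReal))
    (S : Set (Fin n1 → ℝ)) (hS : S ⊆ U) :
    min (zRLR S) (ub S) ≤ zIP ∧ zIP ≤ ub S := by
  constructor
  · rw [hzIP]
    refine le_iInf₂ fun p ⟨hpU, hpY, hpA⟩ => ?_
    by_cases hpS : p.1 ∈ S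
    · calc min (zRLR S) (ub S) ≤ ub S := min_le_right _ _
        _ ≤ z p.1 := by rw [hub]; exact iInf₂_le p.1 hpS
        _ ≤ _ := by rw [hz]; exact iInf₂_le p.2 ⟨hpY, hpA⟩
    · calc min (zRLR S) (ub S) ≤ zRLR S := min_le_left _ _
        _ ≤ _ := by
          rw [hzRLR]
          exact coe_add_biInf_sub_le_of_eq _ _ _ ⟨⟨hpU, hpS⟩, hpY⟩ (by rw [hpA])
  · simp only [hzIP, hub, hz]
    exact biInf_le_biInf_biInf_of_mk_mem _ fun u hu y hy => ⟨hS hu, hy⟩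

/-- lb(μ,S) = min{z^RLR(μ,S), ub(S)} is a valid lower bound on z^IP, and ub(S) a valid
upper bound. -/
theorem stmt_8 {n1 n2 m : ℕ} (U : Set (Fin n1 → ℝ))
    (hUbin : ∀ u ∈ U, ∀ k, u k = 0 ∨ u k = 1) (hUfin : U.Finite)
    (Y : (Fin n1 → ℝ) → Set (Fin n2 → ℝ))
    (c1 : Fin n1 → ℝ) (c2 : Fin n2 → ℝ)
    (A1 : Matrix (Fin m) (Fin n1) ℝ) (A2 : Matrix (Fin m) (Fin n2) ℝ) (b : Fin m → ℝ)
    (z : (Fin n1 → ℝ) → EReal)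
    (hz : ∀ u, z u = ⨅ y ∈ {y : Fin n2 → ℝ | y ∈ Y u ∧ A1.mulVec u + A2.mulVec y = b},
        ((c1 ⬝ᵥ u + c2 ⬝ᵥ y : ℝ) : EReal))
    (ub : Set (Fin n1 → ℝ) → EReal)
    (hub : ∀ S : Set (Fin n1 → ℝ), ub S = ⨅ u ∈ S, z u)
    (μ : Fin m → ℝ)
    (zRLR : Set (Fin n1 → ℝ) → EReal)
    (hzRLR : ∀ S : Set (Fin n1 → ℝ),
      zRLR S = ((μ ⬝ᵥ b : ℝ) : EReal) + ⨅ p ∈ {p : (Fin n1 → ℝ) × (Fin n2 → ℝ) |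
        p.1 ∈ U \ S ∧ p.2 ∈ Y p.1},
        ((c1 ⬝ᵥ p.1 + c2 ⬝ᵥ p.2 - μ ⬝ᵥ (A1.mulVec p.1 + A2.mulVec p.2) : ℝ) : EReal))
    (zIP : EReal)
    (hzIP : zIP = ⨅ p ∈ {p : (Fin n1 → ℝ) × (Fin n2 → ℝ) |
        p.1 ∈ U ∧ p.2 ∈ Y p.1 ∧ A1.mulVec p.1 + A2.mulVec p.2 = b},
        ((c1 ⬝ᵥ p.1 + c2 ⬝ᵥ p.2 : ℝ) : EReal))
    (hfeas : ∃ u ∈ U, ∃ y ∈ Y u, A1.mulVec u + A2.mulVec y = b)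
    (hbdd : zIP ≠ ⊥)
    (S : Set (Fin n1 → ℝ)) (hS : S ⊆ U) :
    min (zRLR S) (ub S) ≤ zIP ∧ zIP ≤ ub S :=
  stmt_8_general U Y c1 c2 A1 A2 b z hz ub hub μ zRLR hzRLR zIP hzIP S hS
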